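/- Let T be a tree and k ≥ 0 an integer. If there exists a path P = (x₁,…,x_p) in T such that every connected component of T \ N[P] (the forest obtained by deleting the closed neighborhood of P) has linear MIM-width at most k, then the linear MIM-width of T is at most k+1. -/

import Mathlib

/-!
Lay `T` out along `P`: every vertex `x` of `P` is followed, for each neighbour `y` of `x` off `P`,
by the components of `T - N[P]` hanging from `y`, each in an optimal layout, and then by `y`.
Components are intervals of this layout, so a cut splits at most one of them, and the crossing
edges inside `T - N[P]` contribute at most `k` to an induced matching. Since `T` is a tree, a
crossing edge meeting `N[P]` either contains the last vertex `m` of `P` before the cut, or joins a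
neighbour `y` of `m` lying after the cut to the component hanging from it. Two edges of the first
kind share `m`; edges of different kinds are joined by the crossing edge `m y`; two edges of the
second kind at `y ≠ y'`, with `y` laid out first, cannot both cross, since the component at `y'`
follows `y`. So at most one of them lies in an induced matching.
-/

open scoped Classical

noncomputable section

namespace LMW

variable {V : Type*} [Fintype V]

/-- The bipartite graph `G[Vᵢ, V̄ᵢ]` consisting of the edges of `G` crossing the cut at
position `i` of the linear layout `σ` (here `Vᵢ` is the set of the first `i` vertices
in the layout). -/
def cutGraph (G : SimpleGraph V) (σ : V ≃ Fin (Fintype.card V)) (i : ℕ) : SimpleGraph V where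
  Adj u v := G.Adj u v ∧
    (((σ u : ℕ) < i ∧ i ≤ (σ v : ℕ)) ∨ ((σ v : ℕ) < i ∧ i ≤ (σ u : ℕ)))
  symm := by
    constructor
    intro u v h
    exact ⟨h.1.symm, h.2.symm⟩
  loopless := by
    constructor
    intro u h
    exact G.ne_of_adj h.1 rfl

/-- `M` is an induced matching in `H`: a set of edges of `H` such that any two distinct
edges of `M` share no endpoint and no endpoint of one is adjacent in `H` to an endpoint
of the other. -/
def IsInducedMatching (H : SimpleGraph V) (M : Finset (Sym2 V)) : Prop :=
  (↑M : Set (Sym2 V)) ⊆ H.edgeSet ∧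
    ∀ e ∈ M, ∀ f ∈ M, e ≠ f → ∀ u ∈ e, ∀ v ∈ f, u ≠ v ∧ ¬ H.Adj u v

/-- `mim H` is the size of a maximum induced matching of `H`. -/
def mim (H : SimpleGraph V) : ℕ :=
  sSup {n : ℕ | ∃ M : Finset (Sym2 V), IsInducedMatching H M ∧ M.card = n}

/-- The MIM-width of `G` under the linear layout `σ`: the maximum over all cuts
`1 ≤ i < |V|` of the size of a maximum induced matching of the cut graph. -/
def mw (G : SimpleGraph V) (σ : V ≃ Fin (Fintype.card V)) : ℕ :=
  (Finset.Ico 1 (Fintype.card V)).sup fun i => mim (cutGraph G σ i)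

/-- The linear MIM-width of `G`: the minimum of `mw G σ` over all linear layouts `σ`. -/
def lmw (G : SimpleGraph V) : ℕ :=
  sInf {m : ℕ | ∃ σ : V ≃ Fin (Fintype.card V), mw G σ = m}

/-- The closed neighborhood `N[s]` of a set of vertices: `s` together with all vertices
adjacent to some vertex of `s`. -/
def closedNbhd (G : SimpleGraph V) (s : Set V) : Set V :=
  s ∪ {v | ∃ u ∈ s, G.Adj u v}

section Cuts

omit [Fintype V]

lemma IsInducedMatching.subset {H : SimpleGraph V} {M N : Finset (Sym2 V)}
    (hM : IsInducedMatching H M) (hNM : N ⊆ M) : IsInducedMatching H N :=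
  ⟨fun _ he => hM.1 (hNM he), fun e he f hf => hM.2 e (hNM he) f (hNM hf)⟩

lemma IsInducedMatching.comap {W : Type*} {H : SimpleGraph V} {M : Finset (Sym2 V)}
    (hM : IsInducedMatching H M) (f : W ↪ V) :
    IsInducedMatching (H.comap f)
      (M.preimage (Sym2.map f) (Sym2.map.injective f.injective).injOn) := by
  refine ⟨fun e he => ?_, fun e he e' he' hne u hu v hv => ?_⟩
  · induction e using Sym2.ind with
    | _ w w' => simpa using hM.1 (Finset.mem_preimage.1 he)
  · have hne' : Sym2.map f e ≠ Sym2.map f e' := (Sym2.map.injective f.injective).ne hne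
    have := hM.2 _ (Finset.mem_preimage.1 he) _ (Finset.mem_preimage.1 he') hne' (f u)
      (Sym2.mem_map.2 ⟨u, hu, rfl⟩) (f v) (Sym2.mem_map.2 ⟨v, hv, rfl⟩)
    exact ⟨fun h => this.1 (congrArg f h), this.2⟩

/-- The bipartite graph `G[A, V ∖ A]`. -/
def crossGraph (G : SimpleGraph V) (A : Set V) : SimpleGraph V where
  Adj u v := G.Adj u v ∧ ((u ∈ A ∧ v ∉ A) ∨ (v ∈ A ∧ u ∉ A))
  symm := ⟨fun _ _ h => ⟨h.1.symm, h.2.symm⟩⟩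
  loopless := ⟨fun u h => G.loopless.irrefl u h.1⟩

lemma exists_eq_of_mem_edgeSet_crossGraph {G : SimpleGraph V} {A : Set V} {e : Sym2 V}
    (he : e ∈ (crossGraph G A).edgeSet) : ∃ u v, e = s(u, v) ∧ G.Adj u v ∧ u ∈ A ∧ v ∉ A := by
  induction e using Sym2.ind with
  | _ u v =>
    obtain ⟨huv, ⟨hu, hv⟩ | ⟨hv, hu⟩⟩ := he
    · exact ⟨u, v, rfl, huv, hu, hv⟩
    · exact ⟨v, u, Sym2.eq_swap, huv.symm, hv, hu⟩

lemma crossGraph_comap {W : Type*} {H : SimpleGraph W} {G : SimpleGraph V} (f : H ↪g G)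
    (A : Set V) : crossGraph H (f ⁻¹' A) = (crossGraph G A).comap f.toEmbedding := by
  ext w w'
  simp [crossGraph]

variable {κ : Type*} [LinearOrder κ]

def IsKeyLowerSet (key : V → κ) (A : Set V) : Prop :=
  ∀ ⦃u v⦄, key u < key v → v ∈ A → u ∈ A

def IsKeyConvex (key : V → κ) (C : Set V) : Prop :=
  ∀ ⦃u w⦄, u ∈ C → w ∈ C → ∀ ⦃v⦄, key u < key v → key v < key w → v ∈ C

lemma IsKeyLowerSet.lt_of_mem_of_notMem {key : V → κ} (hkey : Function.Injective key)
    {A : Set V} (hA : IsKeyLowerSet key A) {u v : V} (hu : u ∈ A) (hv : v ∉ A) :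
    key u < key v := by
  rcases lt_trichotomy (key u) (key v) with h | h | h
  · exact h
  · exact absurd (hkey h ▸ hu) hv
  · exact absurd (hA h hu) hv

lemma IsKeyConvex.inter_nonempty {key : V → κ} (hkey : Function.Injective key) {A C C' : Set V}
    (hA : IsKeyLowerSet key A) (hC : IsKeyConvex key C) (hC' : IsKeyConvex key C')
    {u v u' v' : V} (hu : u ∈ C) (hv : v ∈ C) (hu' : u' ∈ C') (hv' : v' ∈ C')
    (huA : u ∈ A) (hvA : v ∉ A) (hu'A : u' ∈ A) (hv'A : v' ∉ A) : (C ∩ C').Nonempty := by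
  rcases lt_trichotomy (key u) (key u') with h | h | h
  · exact ⟨u', hC hu hv h (hA.lt_of_mem_of_notMem hkey hu'A hvA), hu'⟩
  · exact ⟨u, hu, hkey h ▸ hu'⟩
  · exact ⟨u, hu, hC' hu' hv' h (hA.lt_of_mem_of_notMem hkey huA hv'A)⟩

end Cuts

section Layouts

lemma card_le_mim {H : SimpleGraph V} {M : Finset (Sym2 V)} (hM : IsInducedMatching H M) :
    M.card ≤ mim H := by
  refine le_csSup ?_ ⟨M, hM, rfl⟩
  refine ⟨Fintype.card (Sym2 V), ?_⟩
  rintro n ⟨M, -, rfl⟩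
  exact M.card_le_univ

lemma exists_mw_eq_lmw (G : SimpleGraph V) : ∃ σ : V ≃ Fin (Fintype.card V), mw G σ = lmw G :=
  Nat.sInf_mem (s := {m | ∃ σ, mw G σ = m}) ⟨_, Fintype.equivFin V, rfl⟩

def optimalLayout (G : SimpleGraph V) : V ≃ Fin (Fintype.card V) :=
  (exists_mw_eq_lmw G).choose

lemma mw_optimalLayout (G : SimpleGraph V) : mw G (optimalLayout G) = lmw G :=
  (exists_mw_eq_lmw G).choose_spec

lemma cutGraph_eq_crossGraph (G : SimpleGraph V) (σ : V ≃ Fin (Fintype.card V)) (i : ℕ) :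
    cutGraph G σ i = crossGraph G {v | (σ v : ℕ) < i} := by
  ext u v
  simp only [cutGraph, crossGraph, Set.mem_ofPred_eq]
  exact and_congr_right fun _ => by omega

/-- A cut of a layout at a lower set of positions is one of the cuts counted by `mw`. -/
lemma card_le_mw_of_isInducedMatching_crossGraph {G : SimpleGraph V}
    (σ : V ≃ Fin (Fintype.card V)) {B : Set V} (hB : IsKeyLowerSet (fun v => (σ v : ℕ)) B)
    {M : Finset (Sym2 V)} (hM : IsInducedMatching (crossGraph G B) M) : M.card ≤ mw G σ := by
  obtain rfl | ⟨e, he⟩ := M.eq_empty_or_nonempty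
  · exact Nat.zero_le _
  obtain ⟨u, v, -, -, hu, hv⟩ := exists_eq_of_mem_edgeSet_crossGraph (hM.1 he)
  have hex : ∃ i, ∃ w ∉ B, (σ w : ℕ) = i := ⟨_, v, hv, rfl⟩
  obtain ⟨w, hw, hwj⟩ := Nat.find_spec hex
  have hBj : B = {x | (σ x : ℕ) < Nat.find hex} := by
    ext x
    refine ⟨fun hx => ?_, fun hx => ?_⟩
    · rw [Set.mem_ofPred_eq, ← hwj]
      exact (hB.lt_of_mem_of_notMem (fun x y h => Fin.val_injective.comp σ.injective h) hx hw)
    · by_contra hxB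
      exact Nat.find_min hex hx ⟨x, hxB, rfl⟩
  have hj : Nat.find hex ∈ Finset.Ico 1 (Fintype.card V) := by
    have hu' : (σ u : ℕ) < Nat.find hex := by rw [hBj] at hu; exact hu
    exact Finset.mem_Ico.2 ⟨by omega, hwj ▸ (σ w).isLt⟩
  calc M.card ≤ mim (cutGraph G σ (Nat.find hex)) := by
        rw [cutGraph_eq_crossGraph, ← hBj]; exact card_le_mim hM
    _ ≤ mw G σ := Finset.le_sup (f := fun i => mim (cutGraph G σ i)) hj

variable {κ : Type*} [LinearOrder κ]

lemma lmw_le_of_key (G : SimpleGraph V) (key : V → κ)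
    (hkey : Function.Injective key) (m : ℕ)
    (h : ∀ A : Set V, IsKeyLowerSet key A →
      ∀ M : Finset (Sym2 V), IsInducedMatching (crossGraph G A) M → M.card ≤ m) :
    lmw G ≤ m := by
  let _ : LinearOrder V := LinearOrder.lift' key hkey
  let σ : V ≃ Fin (Fintype.card V) := (Fintype.orderIsoFinOfCardEq V rfl).symm.toEquiv
  refine (Nat.sInf_le (s := {m | ∃ σ, mw G σ = m}) ⟨σ, rfl⟩).trans (Finset.sup_le fun i _ => ?_)
  refine csSup_le ?_ ?_
  · exact ⟨0, ∅, ⟨by simp, by simp⟩, rfl⟩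
  · rintro n ⟨M, hM, rfl⟩
    rw [cutGraph_eq_crossGraph] at hM
    refine h _ (fun u v huv hv => ?_) M hM
    exact lt_trans (Fin.lt_def.1 ((Fintype.orderIsoFinOfCardEq V rfl).symm.lt_iff_lt.2 huv)) hv

lemma card_le_of_forall_notMem {G : SimpleGraph V} {S : Set V} {key : V → κ}
    (hkey : Function.Injective key) {k : ℕ}
    (σ : ∀ c : (G.induce Sᶜ).ConnectedComponent, c.supp ≃ Fin (Fintype.card c.supp))
    (hσ : ∀ c, mw ((G.induce Sᶜ).induce c.supp) (σ c) ≤ k)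
    (hmono : ∀ c (w w' : c.supp), σ c w < σ c w' → key w.1.1 < key w'.1.1)
    (hconv : ∀ c : (G.induce Sᶜ).ConnectedComponent, IsKeyConvex key (Subtype.val '' c.supp))
    {A : Set V} (hA : IsKeyLowerSet key A) {M : Finset (Sym2 V)}
    (hM : IsInducedMatching (crossGraph G A) M) (hMS : ∀ e ∈ M, ∀ v ∈ e, v ∉ S) :
    M.card ≤ k := by
  obtain rfl | ⟨e₀, he₀⟩ := M.eq_empty_or_nonempty
  · exact Nat.zero_le _
  have hcross : ∀ e ∈ M, ∃ (u : V) (hu : u ∉ S) (v : V) (hv : v ∉ S), e = s(u, v) ∧ u ∈ A ∧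
      v ∉ A ∧ (G.induce Sᶜ).connectedComponentMk ⟨v, hv⟩ =
        (G.induce Sᶜ).connectedComponentMk ⟨u, hu⟩ := by
    intro e he
    obtain ⟨u, v, rfl, huv, hu, hv⟩ := exists_eq_of_mem_edgeSet_crossGraph (hM.1 he)
    have huS := hMS _ he u (Sym2.mem_mk_left u v)
    have hvS := hMS _ he v (Sym2.mem_mk_right u v)
    exact ⟨u, huS, v, hvS, rfl, hu, hv,
      (SimpleGraph.ConnectedComponent.connectedComponentMk_eq_of_adj
        (show (G.induce Sᶜ).Adj ⟨u, huS⟩ ⟨v, hvS⟩ from huv)).symm⟩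
  obtain ⟨u₀, hu₀, v₀, hv₀, -, hu₀A, hv₀A, hc₀⟩ := hcross e₀ he₀
  set c₀ := (G.induce Sᶜ).connectedComponentMk ⟨u₀, hu₀⟩
  have hinside : ∀ e ∈ M, ∃ w w' : c₀.supp, e = s(w.1.1, w'.1.1) := by
    intro e he
    obtain ⟨u, hu, v, hv, rfl, huA, hvA, hc⟩ := hcross e he
    set c := (G.induce Sᶜ).connectedComponentMk ⟨u, hu⟩
    obtain ⟨z, ⟨z', hz', rfl⟩, ⟨z'', hz'', hzz⟩⟩ := (hconv c).inter_nonempty hkey hA (hconv c₀)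
      ⟨_, rfl, rfl⟩ ⟨⟨v, hv⟩, hc, rfl⟩ ⟨_, rfl, rfl⟩ ⟨⟨v₀, hv₀⟩, hc₀, rfl⟩ huA hvA hu₀A hv₀A
    have hcc₀ : c = c₀ := by
      obtain rfl : z'' = z' := Subtype.ext hzz
      rw [SimpleGraph.ConnectedComponent.mem_supp_iff] at hz' hz''
      rw [← hz', hz'']
    exact ⟨⟨⟨u, hu⟩, hcc₀⟩, ⟨⟨v, hv⟩, hc.trans hcc₀⟩, rfl⟩
  let f : (G.induce Sᶜ).induce c₀.supp ↪g G :=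
    (SimpleGraph.Embedding.induce Sᶜ).comp (SimpleGraph.Embedding.induce c₀.supp)
  have hM' := hM.comap f.toEmbedding
  rw [← crossGraph_comap] at hM'
  have hcard : (M.preimage (Sym2.map f.toEmbedding)
      (Sym2.map.injective f.toEmbedding.injective).injOn).card = M.card := by
    rw [Finset.card_preimage, Finset.filter_true_of_mem]
    intro e he
    obtain ⟨w, w', rfl⟩ := hinside e he
    exact ⟨s(w, w'), rfl⟩
  have hB : IsKeyLowerSet (fun w => (σ c₀ w : ℕ)) (f ⁻¹' A) :=
    fun w w' h hw' => hA (hmono c₀ w w' h) hw'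
  exact hcard ▸ (card_le_mw_of_isInducedMatching_crossGraph (σ c₀) hB hM').trans (hσ c₀)

end Layouts

section Acyclic

omit [Fintype V]

open SimpleGraph

variable {G : SimpleGraph V}

lemma eq_of_adj_of_preconnected_induce (hG : G.IsAcyclic) {C : Set V}
    (hC : (G.induce C).Preconnected) {y x x' : V} (hy : y ∉ C) (hx : x ∈ C) (hx' : x' ∈ C)
    (h : G.Adj y x) (h' : G.Adj y x') : x = x' := by
  obtain ⟨q⟩ := hC ⟨x, hx⟩ ⟨x', hx'⟩
  have hq : ∀ z ∈ (q.map (Embedding.induce C).toHom).support, z ∈ C := by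
    intro z hz
    rw [Walk.support_map, List.mem_map] at hz
    obtain ⟨z', -, rfl⟩ := hz
    exact z'.2
  let r : G.Walk x x' := (q.map (Embedding.induce C).toHom).bypass
  have hrC : ∀ z ∈ r.support, z ∈ C := fun z hz => hq z (Walk.support_bypass_subset_support _ hz)
  have hpath : (Walk.cons h r).IsPath := (Walk.bypass_isPath _).cons fun hyr => hy (hrC y hyr)
  have hedge : (Walk.cons h' Walk.nil).IsPath := by simp [h'.ne]
  have heq : Walk.cons h r = Walk.cons h' Walk.nil :=
    congrArg Subtype.val ((hG.subsingleton_path y x').elim ⟨_, hpath⟩ ⟨_, hedge⟩)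
  have hxmem : x ∈ (Walk.cons h r).support := by simp
  rw [heq] at hxmem
  simp only [Walk.support_cons, Walk.support_nil, List.mem_cons, List.not_mem_nil, or_false]
    at hxmem
  exact hxmem.resolve_left fun hxy => hy (hxy ▸ hx)

lemma ConnectedComponent.preconnected_induce_image_supp {s : Set V}
    (c : (G.induce s).ConnectedComponent) : (G.induce (Subtype.val '' c.supp)).Preconnected := by
  let φ : c.toSimpleGraph →g G.induce (Subtype.val '' c.supp) :=
    { toFun := fun w => ⟨w.1.1, w.1, w.2, rfl⟩
      map_rel' := id }
  refine c.connected_toSimpleGraph.preconnected.map φ ?_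
  rintro ⟨_, w, hw, rfl⟩
  exact ⟨⟨w, hw⟩, rfl⟩

lemma idxOf_eq_succ_of_adj (hG : G.IsAcyclic) {a b : V} {P : G.Walk a b} (hP : P.IsPath)
    {u v : V} (hu : u ∈ P.support) (hv : v ∈ P.support) (huv : G.Adj u v)
    (hlt : P.support.idxOf u < P.support.idxOf v) :
    P.support.idxOf v = P.support.idxOf u + 1 := by
  have hmem : u ∈ (P.takeUntil v hv).support := by
    rw [(P.support_takeUntil_prefix_support hv).mem_iff_idxOf_lt_length, Walk.length_support,
      Walk.length_takeUntil]
    omega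
  have := congrArg Walk.length (hG.path_concat (hP.takeUntil hu) (hP.takeUntil hv) huv hmem)
  rwa [Walk.length_concat, Walk.length_takeUntil, Walk.length_takeUntil] at this

end Acyclic

section PathNbhd

omit [Fintype V]

open SimpleGraph

variable {T : SimpleGraph V} {a b : V} (P : T.Walk a b)

abbrev pathNbhd : Set V := closedNbhd T {v | v ∈ P.support}

lemma mem_pathNbhd_of_adj {x y : V} (hx : x ∈ P.support) (h : T.Adj x y) : y ∈ pathNbhd P :=
  Or.inr ⟨x, hx, h⟩

lemma notMem_support_of_adj {u y : V} (hu : u ∉ pathNbhd P) (h : T.Adj u y) : y ∉ P.support :=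
  fun hy => hu (mem_pathNbhd_of_adj P hy h.symm)

/-- The neighbour of `y` on `P`: unique for `y ∈ N[P] ∖ P` (`pathNbr_eq`), arbitrary otherwise. -/
def pathNbr (y : V) : V :=
  @Classical.epsilon V ⟨a⟩ fun x => x ∈ P.support ∧ T.Adj x y

lemma pathNbr_spec {y : V} (hy : y ∈ pathNbhd P) (hyP : y ∉ P.support) :
    pathNbr P y ∈ P.support ∧ T.Adj (pathNbr P y) y :=
  Classical.epsilon_spec (hy.resolve_left hyP)

lemma pathNbr_eq (hT : T.IsAcyclic) {x y : V} (hx : x ∈ P.support) (hyP : y ∉ P.support)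
    (h : T.Adj x y) : pathNbr P y = x := by
  obtain ⟨hmem, hadj⟩ := pathNbr_spec P (mem_pathNbhd_of_adj P hx h) hyP
  exact eq_of_adj_of_preconnected_induce hT P.connected_induce_support.preconnected hyP hmem hx
    hadj.symm h.symm

lemma preconnected_induce_support_union {y : V} (hy : y ∈ pathNbhd P) (hyP : y ∉ P.support) :
    (T.induce ({v | v ∈ P.support} ∪ {pathNbr P y, y})).Preconnected :=
  have h := pathNbr_spec P hy hyP
  (induce_union_connected P.connected_induce_support.preconnected
    (induce_pair_connected_of_adj h.2).preconnected ⟨pathNbr P y, h.1, by simp⟩).preconnected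

lemma not_adj_of_mem_pathNbhd (hT : T.IsAcyclic) {y y' : V} (hy : y ∈ pathNbhd P)
    (hyP : y ∉ P.support) (hy' : y' ∈ pathNbhd P) (hy'P : y' ∉ P.support) : ¬ T.Adj y y' := by
  intro h
  have h' := pathNbr_spec P hy' hy'P
  have hout : y' ∉ {v | v ∈ P.support} ∪ {pathNbr P y, y} := by
    rintro (hP | rfl | rfl)
    · exact hy'P hP
    · exact hy'P (pathNbr_spec P hy hyP).1
    · exact h.ne rfl
  have := eq_of_adj_of_preconnected_induce hT (preconnected_induce_support_union P hy hyP) hout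
    (Or.inr (Or.inr rfl)) (Or.inl h'.1) h.symm h'.2.symm
  exact hyP (this ▸ h'.1)

lemma eq_of_adj_of_connectedComponentMk_eq (hT : T.IsAcyclic) {u u' y y' : V}
    (hu : u ∉ pathNbhd P) (hu' : u' ∉ pathNbhd P)
    (hc : (T.induce (pathNbhd P)ᶜ).connectedComponentMk ⟨u', hu'⟩ =
      (T.induce (pathNbhd P)ᶜ).connectedComponentMk ⟨u, hu⟩)
    (hy : y ∈ pathNbhd P) (hy' : y' ∈ pathNbhd P) (h : T.Adj u y) (h' : T.Adj u' y') : y = y' := by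
  by_contra hne
  have hyP := notMem_support_of_adj P hu h
  have hy'P := notMem_support_of_adj P hu' h'
  have hpn := pathNbr_spec P hy' hy'P
  have hconn := connected_induce_union (preconnected_induce_support_union P hy hyP)
    (ConnectedComponent.preconnected_induce_image_supp
      ((T.induce (pathNbhd P)ᶜ).connectedComponentMk ⟨u, hu⟩))
    (Or.inr (Or.inr rfl)) ⟨⟨u, hu⟩, rfl, rfl⟩ h.symm
  have hout : y' ∉ ({v | v ∈ P.support} ∪ {pathNbr P y, y}) ∪
      Subtype.val '' ((T.induce (pathNbhd P)ᶜ).connectedComponentMk ⟨u, hu⟩).supp := by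
    rintro ((hP | rfl | rfl) | ⟨w, -, rfl⟩)
    · exact hy'P hP
    · exact hy'P (pathNbr_spec P hy hyP).1
    · exact hne rfl
    · exact w.2 hy'
  have := eq_of_adj_of_preconnected_induce hT hconn.preconnected hout
    (Or.inr ⟨⟨u', hu'⟩, hc, rfl⟩) (Or.inl (Or.inl hpn.1)) h'.symm hpn.2.symm
  exact hu' (Or.inl (by rw [show u' = pathNbr P y' from this]; exact hpn.1))

/-- The vertex of `N[P]` adjacent to the component `c` (unique by
`eq_of_adj_of_connectedComponentMk_eq`; arbitrary if there is none). -/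
def attachment (c : (T.induce (pathNbhd P)ᶜ).ConnectedComponent) : V :=
  @Classical.epsilon V ⟨a⟩ fun y => y ∈ pathNbhd P ∧ ∃ w ∈ c.supp, T.Adj w.1 y

lemma attachment_eq (hT : T.IsAcyclic) {u y : V} (hu : u ∉ pathNbhd P) (hy : y ∈ pathNbhd P)
    (h : T.Adj u y) :
    attachment P ((T.induce (pathNbhd P)ᶜ).connectedComponentMk ⟨u, hu⟩) = y := by
  have hex : ∃ y' ∈ pathNbhd P,
      ∃ w ∈ ((T.induce (pathNbhd P)ᶜ).connectedComponentMk ⟨u, hu⟩).supp, T.Adj w.1 y' :=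
    ⟨y, hy, ⟨u, hu⟩, rfl, h⟩
  obtain ⟨hy', w, hw, h'⟩ := Classical.epsilon_spec hex
  exact eq_of_adj_of_connectedComponentMk_eq P hT w.2 hu hw.symm hy' hy h' h

def IsLastOnPath (A : Set V) (m : V) : Prop :=
  m ∈ P.support ∧ m ∈ A ∧ ∀ x ∈ P.support, x ∈ A → P.support.idxOf x ≤ P.support.idxOf m

lemma IsLastOnPath.eq {A : Set V} {m m' : V} (h : IsLastOnPath P A m)
    (h' : IsLastOnPath P A m') : m = m' :=
  (List.idxOf_inj h.1).1 (le_antisymm (h'.2.2 m h.1 h.2.1) (h.2.2 m' h'.1 h'.2.1))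

end PathNbhd

section PathLayout

open SimpleGraph

variable {T : SimpleGraph V} {a b : V} (P : T.Walk a b)

def lex4 (i j k l : ℕ) : ℕ ×ₗ ℕ ×ₗ ℕ ×ₗ ℕ := toLex (i, toLex (j, toLex (k, l)))

lemma lex4_lt_lex4 {i j k l i' j' k' l' : ℕ} : lex4 i j k l < lex4 i' j' k' l' ↔
    i < i' ∨ i = i' ∧ (j < j' ∨ j = j' ∧ (k < k' ∨ k = k' ∧ l < l')) := by
  simp [lex4, Prod.Lex.lt_iff]

lemma lex4_inj {i j k l i' j' k' l' : ℕ} :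
    lex4 i j k l = lex4 i' j' k' l' ↔ i = i' ∧ j = j' ∧ k = k' ∧ l = l' := by
  simp [lex4]

def componentPos (w : ↥(pathNbhd P)ᶜ) : ℕ :=
  optimalLayout ((T.induce (pathNbhd P)ᶜ).induce
    ((T.induce (pathNbhd P)ᶜ).connectedComponentMk w).supp) ⟨w, rfl⟩

lemma componentPos_eq {c : (T.induce (pathNbhd P)ᶜ).ConnectedComponent} {w : ↥(pathNbhd P)ᶜ}
    (hw : w ∈ c.supp) :
    componentPos P w = optimalLayout ((T.induce (pathNbhd P)ᶜ).induce c.supp) ⟨w, hw⟩ := by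
  rw [ConnectedComponent.mem_supp_iff] at hw
  subst hw
  rfl

lemma eq_of_componentPos_eq {w w' : ↥(pathNbhd P)ᶜ}
    (hc : (T.induce (pathNbhd P)ᶜ).connectedComponentMk w' =
      (T.induce (pathNbhd P)ᶜ).connectedComponentMk w)
    (h : componentPos P w = componentPos P w') : w = w' := by
  rw [componentPos_eq P (c := (T.induce (pathNbhd P)ᶜ).connectedComponentMk w) rfl,
    componentPos_eq P hc] at h
  exact congrArg Subtype.val ((optimalLayout _).injective (Fin.val_injective h))

/-- The layout of `T`: the vertices `x` of `P` in order, each followed, for every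
`y ∈ N(x) ∖ P`, by the components of `T - N[P]` attached at `y` (each in an optimal layout) and
then by `y` itself. The coordinates are: the position on `P` of the path vertex owning the block,
`0` for that path vertex and the rank of `y` plus one otherwise, the rank of the component (the
number of components, for `y` itself), and the position inside the component. -/
def layoutKey (v : V) : ℕ ×ₗ ℕ ×ₗ ℕ ×ₗ ℕ :=
  if v ∈ P.support then lex4 (P.support.idxOf v) 0 0 0
  else if hv : v ∈ pathNbhd P then
    lex4 (P.support.idxOf (pathNbr P v)) (Fintype.equivFin V v + 1)
      (Fintype.card (T.induce (pathNbhd P)ᶜ).ConnectedComponent) 0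
  else
    let c := (T.induce (pathNbhd P)ᶜ).connectedComponentMk ⟨v, hv⟩
    lex4 (P.support.idxOf (pathNbr P (attachment P c))) (Fintype.equivFin V (attachment P c) + 1)
      (Fintype.equivFin _ c) (componentPos P ⟨v, hv⟩)

lemma layoutKey_of_mem_support {v : V} (hv : v ∈ P.support) :
    layoutKey P v = lex4 (P.support.idxOf v) 0 0 0 :=
  if_pos hv

lemma layoutKey_of_mem_pathNbhd {v : V} (hvP : v ∉ P.support) (hv : v ∈ pathNbhd P) :
    layoutKey P v = lex4 (P.support.idxOf (pathNbr P v)) (Fintype.equivFin V v + 1)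
      (Fintype.card (T.induce (pathNbhd P)ᶜ).ConnectedComponent) 0 := by
  rw [layoutKey, if_neg hvP, dif_pos hv]

lemma layoutKey_of_notMem {v : V} (hv : v ∉ pathNbhd P) :
    layoutKey P v =
      lex4 (P.support.idxOf (pathNbr P (attachment P
          ((T.induce (pathNbhd P)ᶜ).connectedComponentMk ⟨v, hv⟩))))
        (Fintype.equivFin V (attachment P
          ((T.induce (pathNbhd P)ᶜ).connectedComponentMk ⟨v, hv⟩)) + 1)
        (Fintype.equivFin _ ((T.induce (pathNbhd P)ᶜ).connectedComponentMk ⟨v, hv⟩))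
        (componentPos P ⟨v, hv⟩) := by
  rw [layoutKey, if_neg (show v ∉ P.support from fun h => hv (Or.inl h)), dif_neg hv]

lemma layoutKey_of_adj (hT : T.IsAcyclic) {u y : V} (hu : u ∉ pathNbhd P) (hy : y ∈ pathNbhd P)
    (h : T.Adj u y) : ∃ r < Fintype.card (T.induce (pathNbhd P)ᶜ).ConnectedComponent, ∃ s,
      layoutKey P u =
        lex4 (P.support.idxOf (pathNbr P y)) (Fintype.equivFin V y + 1) r s := by
  rw [layoutKey_of_notMem P hu, attachment_eq P hT hu hy h]
  exact ⟨_, Fin.isLt _, _, rfl⟩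

lemma layoutKey_cases (v : V) :
    (v ∈ P.support ∧ layoutKey P v = lex4 (P.support.idxOf v) 0 0 0) ∨
    (v ∉ P.support ∧ v ∈ pathNbhd P ∧
      layoutKey P v = lex4 (P.support.idxOf (pathNbr P v)) (Fintype.equivFin V v + 1)
        (Fintype.card (T.induce (pathNbhd P)ᶜ).ConnectedComponent) 0) ∨
    (∃ hv : v ∉ pathNbhd P, ∃ i j, layoutKey P v = lex4 i (j + 1)
      (Fintype.equivFin _ ((T.induce (pathNbhd P)ᶜ).connectedComponentMk ⟨v, hv⟩))
      (componentPos P ⟨v, hv⟩)) := by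
  by_cases hvP : v ∈ P.support
  · exact Or.inl ⟨hvP, layoutKey_of_mem_support P hvP⟩
  by_cases hv : v ∈ pathNbhd P
  · exact Or.inr (Or.inl ⟨hvP, hv, layoutKey_of_mem_pathNbhd P hvP hv⟩)
  · exact Or.inr (Or.inr ⟨hv, _, _, layoutKey_of_notMem P hv⟩)

lemma layoutKey_injective : Function.Injective (layoutKey P) := by
  intro v w h
  rcases layoutKey_cases P v with ⟨hvP, hv⟩ | ⟨hvP, -, hv⟩ | ⟨hvS, i, j, hv⟩ <;>
    rcases layoutKey_cases P w with ⟨hwP, hw⟩ | ⟨hwP, -, hw⟩ | ⟨hwS, i', j', hw⟩ <;>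
    rw [hv, hw, lex4_inj] at h
  · exact (List.idxOf_inj hvP).1 h.1
  · omega
  · omega
  · omega
  · exact (Fintype.equivFin V).injective (Fin.val_injective (by omega))
  · have := Fin.isLt (Fintype.equivFin _ ((T.induce (pathNbhd P)ᶜ).connectedComponentMk ⟨w, hwS⟩))
    omega
  · omega
  · have := Fin.isLt (Fintype.equivFin _ ((T.induce (pathNbhd P)ᶜ).connectedComponentMk ⟨v, hvS⟩))
    omega
  · have hc := (Fintype.equivFin _).injective (Fin.val_injective h.2.2.1)
    exact congrArg Subtype.val (eq_of_componentPos_eq P hc.symm h.2.2.2)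

lemma isKeyConvex_layoutKey (c : (T.induce (pathNbhd P)ᶜ).ConnectedComponent) :
    IsKeyConvex (layoutKey P) (Subtype.val '' c.supp) := by
  rintro _ _ ⟨⟨x, hx⟩, hxc, rfl⟩ ⟨⟨x', hx'⟩, hx'c, rfl⟩ v h h'
  rw [ConnectedComponent.mem_supp_iff] at hxc hx'c
  rw [layoutKey_of_notMem P hx, hxc] at h
  rw [layoutKey_of_notMem P hx', hx'c] at h'
  rcases layoutKey_cases P v with ⟨-, hv⟩ | ⟨-, -, hv⟩ | ⟨hvS, i, j, hv⟩ <;>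
    rw [hv, lex4_lt_lex4] at h h'
  · omega
  · have := Fin.isLt (Fintype.equivFin _ c)
    omega
  · have hrank : ((Fintype.equivFin _ ((T.induce (pathNbhd P)ᶜ).connectedComponentMk ⟨v, hvS⟩)
      : ℕ)) = Fintype.equivFin _ c := by omega
    exact ⟨⟨v, hvS⟩, (Fintype.equivFin _).injective (Fin.val_injective hrank), rfl⟩

lemma layoutKey_lt_of_optimalLayout_lt (c : (T.induce (pathNbhd P)ᶜ).ConnectedComponent)
    (w w' : c.supp)
    (h : optimalLayout ((T.induce (pathNbhd P)ᶜ).induce c.supp) w <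
      optimalLayout ((T.induce (pathNbhd P)ᶜ).induce c.supp) w') :
    layoutKey P w.1.1 < layoutKey P w'.1.1 := by
  obtain ⟨⟨x, hx⟩, hxc⟩ := w
  obtain ⟨⟨x', hx'⟩, hx'c⟩ := w'
  rw [layoutKey_of_notMem P hx, layoutKey_of_notMem P hx', componentPos_eq P hxc,
    componentPos_eq P hx'c]
  rw [ConnectedComponent.mem_supp_iff] at hxc hx'c
  simp only [hxc, hx'c, lex4_lt_lex4, lt_self_iff_false, true_and, false_or]
  exact h

end PathLayout

section CrossingEdges

open SimpleGraph

variable {T : SimpleGraph V} {a b : V} (P : T.Walk a b) {A : Set V} {u v : V}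

lemma isLastOnPath_of_mem_support (hT : T.IsAcyclic) (hP : P.IsPath)
    (hA : IsKeyLowerSet (layoutKey P) A) (huv : T.Adj u v) (hu : u ∈ A) (hv : v ∉ A)
    (huP : u ∈ P.support) : IsLastOnPath P A u := by
  refine ⟨huP, hu, fun x hxP hx => ?_⟩
  have hxv := hA.lt_of_mem_of_notMem (layoutKey_injective P) hx hv
  by_cases hvP : v ∈ P.support
  · have huv' := hA.lt_of_mem_of_notMem (layoutKey_injective P) hu hv
    rw [layoutKey_of_mem_support P huP, layoutKey_of_mem_support P hvP, lex4_lt_lex4] at huv'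
    rw [layoutKey_of_mem_support P hxP, layoutKey_of_mem_support P hvP, lex4_lt_lex4] at hxv
    have := idxOf_eq_succ_of_adj hT hP huP hvP huv (by omega)
    omega
  · rw [layoutKey_of_mem_support P hxP,
      layoutKey_of_mem_pathNbhd P hvP (mem_pathNbhd_of_adj P huP huv),
      pathNbr_eq P hT huP hvP huv, lex4_lt_lex4] at hxv
    omega

lemma notMem_pathNbhd_of_crossing (hT : T.IsAcyclic) (hA : IsKeyLowerSet (layoutKey P) A)
    (huv : T.Adj u v) (hu : u ∈ A) (hv : v ∉ A) (huP : u ∉ P.support) : u ∉ pathNbhd P := by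
  intro huS
  have hlt := hA.lt_of_mem_of_notMem (layoutKey_injective P) hu hv
  by_cases hvP : v ∈ P.support
  · rw [layoutKey_of_mem_pathNbhd P huP huS, pathNbr_eq P hT hvP huP huv.symm,
      layoutKey_of_mem_support P hvP, lex4_lt_lex4] at hlt
    omega
  by_cases hvS : v ∈ pathNbhd P
  · exact not_adj_of_mem_pathNbhd P hT huS huP hvS hvP huv
  · obtain ⟨r, hr, s, hkey⟩ := layoutKey_of_adj P hT hvS huS huv.symm
    rw [hkey, layoutKey_of_mem_pathNbhd P huP huS, lex4_lt_lex4] at hlt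
    omega

lemma isLastOnPath_pathNbr_of_crossing (hT : T.IsAcyclic) (hA : IsKeyLowerSet (layoutKey P) A)
    (huv : T.Adj u v) (hu : u ∈ A) (hv : v ∉ A) (huS : u ∉ pathNbhd P)
    (hvS : v ∈ pathNbhd P) : IsLastOnPath P A (pathNbr P v) := by
  have hvP := notMem_support_of_adj P huS huv
  obtain ⟨r, -, s, hkey⟩ := layoutKey_of_adj P hT huS hvS huv
  have hm := (pathNbr_spec P hvS hvP).1
  refine ⟨hm, hA ?_ hu, fun x hxP hx => ?_⟩
  · rw [hkey, layoutKey_of_mem_support P hm, lex4_lt_lex4]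
    omega
  · have hxv := hA.lt_of_mem_of_notMem (layoutKey_injective P) hx hv
    rw [layoutKey_of_mem_support P hxP, layoutKey_of_mem_pathNbhd P hvP hvS, lex4_lt_lex4] at hxv
    omega

lemma crossing_edge_cases (hT : T.IsAcyclic) (hP : P.IsPath) (hA : IsKeyLowerSet (layoutKey P) A)
    (huv : T.Adj u v) (hu : u ∈ A) (hv : v ∉ A) (hS : u ∈ pathNbhd P ∨ v ∈ pathNbhd P) :
    IsLastOnPath P A u ∨
      u ∉ pathNbhd P ∧ v ∈ pathNbhd P ∧ IsLastOnPath P A (pathNbr P v) := by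
  by_cases huP : u ∈ P.support
  · exact Or.inl (isLastOnPath_of_mem_support P hT hP hA huv hu hv huP)
  have huS := notMem_pathNbhd_of_crossing P hT hA huv hu hv huP
  have hvS := hS.resolve_left huS
  exact Or.inr ⟨huS, hvS, isLastOnPath_pathNbr_of_crossing P hT hA huv hu hv huS hvS⟩

lemma layoutKey_lt_of_pathNbr_eq (hT : T.IsAcyclic) {y u' y' : V} (hy : y ∈ pathNbhd P)
    (hyP : y ∉ P.support) (hu' : u' ∉ pathNbhd P) (hy' : y' ∈ pathNbhd P) (h' : T.Adj u' y')
    (hm : pathNbr P y = pathNbr P y')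
    (hlt : (Fintype.equivFin V y : ℕ) < Fintype.equivFin V y') :
    layoutKey P y < layoutKey P u' := by
  obtain ⟨r, -, s, hkey⟩ := layoutKey_of_adj P hT hu' hy' h'
  rw [hkey, layoutKey_of_mem_pathNbhd P hyP hy, hm, lex4_lt_lex4]
  omega

lemma card_le_one_of_forall_exists_mem_pathNbhd (hT : T.IsAcyclic) (hP : P.IsPath)
    (hA : IsKeyLowerSet (layoutKey P) A) {M : Finset (Sym2 V)}
    (hM : IsInducedMatching (crossGraph T A) M) (hMS : ∀ e ∈ M, ∃ v ∈ e, v ∈ pathNbhd P) :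
    M.card ≤ 1 := by
  rw [Finset.card_le_one]
  intro e he f hf
  by_contra hne
  have hsep := hM.2 e he f hf hne
  obtain ⟨u, v, rfl, huv, hu, hv⟩ := exists_eq_of_mem_edgeSet_crossGraph (hM.1 he)
  obtain ⟨u', v', rfl, huv', hu', hv'⟩ := exists_eq_of_mem_edgeSet_crossGraph (hM.1 hf)
  have hmeets : ∀ {x y : V}, s(x, y) ∈ M → x ∈ pathNbhd P ∨ y ∈ pathNbhd P := by
    intro x y hxy
    obtain ⟨z, hz, hzS⟩ := hMS _ hxy
    rcases Sym2.mem_iff.1 hz with rfl | rfl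
    · exact Or.inl hzS
    · exact Or.inr hzS
  rcases crossing_edge_cases P hT hP hA huv hu hv (hmeets he) with hl | ⟨huS, hvS, hl⟩ <;>
    rcases crossing_edge_cases P hT hP hA huv' hu' hv' (hmeets hf) with hl' | ⟨huS', hvS', hl'⟩
  · exact (hsep u (Sym2.mem_mk_left u v) u' (Sym2.mem_mk_left u' v')).1 (hl.eq P hl')
  · have hadj : T.Adj u v' :=
      hl.eq P hl' ▸ (pathNbr_spec P hvS' (notMem_support_of_adj P huS' huv')).2
    exact (hsep u (Sym2.mem_mk_left u v) v' (Sym2.mem_mk_right u' v')).2 ⟨hadj, Or.inl ⟨hu, hv'⟩⟩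
  · have hadj : T.Adj u' v :=
      hl'.eq P hl ▸ (pathNbr_spec P hvS (notMem_support_of_adj P huS huv)).2
    exact (hsep v (Sym2.mem_mk_right u v) u' (Sym2.mem_mk_left u' v')).2
      ⟨hadj.symm, Or.inr ⟨hu', hv⟩⟩
  · have hvP := notMem_support_of_adj P huS huv
    have hv'P := notMem_support_of_adj P huS' huv'
    rcases lt_trichotomy (Fintype.equivFin V v : ℕ) (Fintype.equivFin V v') with h | h | h
    · exact hv (hA (layoutKey_lt_of_pathNbr_eq P hT hvS hvP huS' hvS' huv' (hl.eq P hl') h) hu')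
    · exact (hsep v (Sym2.mem_mk_right u v) v' (Sym2.mem_mk_right u' v')).1
        ((Fintype.equivFin V).injective (Fin.val_injective h))
    · exact hv' (hA (layoutKey_lt_of_pathNbr_eq P hT hvS' hv'P huS hvS huv (hl'.eq P hl) h) hu)

end CrossingEdges

/-- **Path layout lemma.** If `T` is a tree and there is a path `P` in `T` such that every
connected component of `T ∖ N[P]` has linear MIM-width at most `k`, then `lmw T ≤ k + 1`. -/
theorem path_layout_lemma {V : Type*} [Fintype V] (T : SimpleGraph V) (hT : T.IsTree)
    (k : ℕ) (a b : V) (P : T.Walk a b) (hP : P.IsPath)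
    (hcomp : ∀ c : (T.induce (closedNbhd T {v | v ∈ P.support})ᶜ).ConnectedComponent,
      lmw ((T.induce (closedNbhd T {v | v ∈ P.support})ᶜ).induce c.supp) ≤ k) :
    lmw T ≤ k + 1 := by
  refine lmw_le_of_key T (layoutKey P) (layoutKey_injective P) (k + 1) fun A hA M hM => ?_
  rw [← Finset.card_filter_add_card_filter_not (fun e => ∃ v ∈ e, v ∈ pathNbhd P)]
  have hmeets := card_le_one_of_forall_exists_mem_pathNbhd P hT.isAcyclic hP hA
    (hM.subset (Finset.filter_subset _ M)) fun e he => (Finset.mem_filter.1 he).2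
  have hinside := card_le_of_forall_notMem (layoutKey_injective P)
    (fun c => optimalLayout _) (fun c => (mw_optimalLayout _).trans_le (hcomp c))
    (layoutKey_lt_of_optimalLayout_lt P) (isKeyConvex_layoutKey P) hA
    (hM.subset (Finset.filter_subset (fun e => ¬ ∃ v ∈ e, v ∈ pathNbhd P) M))
    fun e he v hv hvS => (Finset.mem_filter.1 he).2 ⟨v, hv, hvS⟩
  omega

end LMW
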